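/- arXiv:math/0205116 — 4 statements merged into one kernel-verified Lean document; each statement's English description precedes it below -/
import Mathlib

section
/- Let a : ℤ × ℤ → ℂ be a function with a_{n,m} = 0 whenever n < 0 or m < 0, satisfying the recursion a_{n−m,m} + a_{n,m−n} = a_{n,m} for all integers n, m ≥ 0, and the antisymmetry a_{n,m} = −a_{m,n} for all n, m ≥ 0. Then a_{n,m} = 0 for all n, m ≥ 1; moreover, for n ≥ 1, a_{0,n} = −a_{n,0}. -/
open Complex Filter Topology

/-- The open upper half-plane as a subset of `ℂ`. -/
def UHP : Set ℂ := {z : ℂ | 0 < z.im}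

/-- `qexp τ = e^{2πiτ}`. -/
noncomputable def qexp (τ : ℂ) : ℂ := Complex.exp (2 * Real.pi * Complex.I * τ)

/-- Elliptic zeta values `Z_k(τ,σ)`. -/
noncomputable def ellipticZeta (k : ℕ) (τ σ : ℂ) : ℂ :=
  -((2 * (Real.pi : ℂ) * Complex.I) ^ k / (Nat.factorial (k - 1) : ℂ)) *
    ∑' j : ℕ+, (j : ℂ) ^ (k - 1) *
      (qexp τ ^ (j : ℕ) - (-1 : ℂ) ^ k * qexp σ ^ (j : ℕ)) /
      ((1 - qexp τ ^ (j : ℕ)) * (1 - qexp σ ^ (j : ℕ)))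

/-- `D_k(q)`: the normalized generating function of sums of `(k-1)`-st powers of divisors. -/
noncomputable def Dk (k : ℕ) (q : ℂ) : ℂ :=
  ((-2 * (Real.pi : ℂ) * Complex.I) ^ k / (Nat.factorial (k - 1) : ℂ)) *
    ∑' n : ℕ+, (∑ d ∈ Nat.divisors (n : ℕ), (d : ℂ) ^ (k - 1)) * q ^ (n : ℕ)

/-- Ruijsenaars's elliptic gamma function. -/
noncomputable def ellipticGamma (z τ σ : ℂ) : ℂ :=
  ∏' p : ℕ × ℕ,
    (1 - qexp τ ^ (p.1 + 1) * qexp σ ^ (p.2 + 1) * Complex.exp (-(2 * Real.pi * Complex.I) * z)) /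
    (1 - qexp τ ^ p.1 * qexp σ ^ p.2 * Complex.exp (2 * Real.pi * Complex.I * z))

/-- The modified theta function `θ₀(z,τ)`. -/
noncomputable def theta0 (z τ : ℂ) : ℂ :=
  ∏' j : ℕ, (1 - qexp τ ^ (j + 1) * Complex.exp (-(2 * Real.pi * Complex.I) * z)) *
            (1 - qexp τ ^ j * Complex.exp (2 * Real.pi * Complex.I * z))

/-- A modular form of weight `k` for `SL(2,ℤ)`: a holomorphic function on the
upper half-plane transforming with weight `k` under `SL(2,ℤ)` and bounded as `Im τ → ∞`. -/
def IsModularForm (k : ℕ) (G : ℂ → ℂ) : Prop :=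
  DifferentiableOn ℂ G UHP ∧
  (∀ A : Matrix.SpecialLinearGroup (Fin 2) ℤ, ∀ τ ∈ UHP,
      G (((A 0 0 : ℤ) * τ + (A 0 1 : ℤ)) / ((A 1 0 : ℤ) * τ + (A 1 1 : ℤ))) =
        ((A 1 0 : ℤ) * τ + (A 1 1 : ℤ)) ^ k * G τ) ∧
  (∃ C : ℝ, ∀ τ ∈ UHP, 1 ≤ τ.im → ‖G τ‖ ≤ C)

/-- All factors in the defining double product of the elliptic gamma function are nonzero. -/
def EGFactorsNeZero (z τ σ : ℂ) : Prop :=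
  ∀ j ℓ : ℕ,
    (1 - qexp τ ^ (j + 1) * qexp σ ^ (ℓ + 1) * Complex.exp (-(2 * Real.pi * Complex.I) * z)) ≠ 0 ∧
    (1 - qexp τ ^ j * qexp σ ^ ℓ * Complex.exp (2 * Real.pi * Complex.I * z)) ≠ 0

/-- the combinatorial (Euclidean algorithm) core of the proof:
an antisymmetric array supported in the first quadrant satisfying
`a_{n-m,m} + a_{n,m-n} = a_{n,m}` vanishes off the axes, and is odd on the axes. -/
theorem euclidean_recursion_coefficients_vanish
    (a : ℤ × ℤ → ℂ)
    (hzero : ∀ n m : ℤ, (n < 0 ∨ m < 0) → a (n, m) = 0)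
    (hrec : ∀ n m : ℤ, 0 ≤ n → 0 ≤ m → a (n - m, m) + a (n, m - n) = a (n, m))
    (hanti : ∀ n m : ℤ, 0 ≤ n → 0 ≤ m → a (n, m) = -a (m, n)) :
    (∀ n m : ℤ, 1 ≤ n → 1 ≤ m → a (n, m) = 0) ∧
    (∀ n : ℤ, 1 ≤ n → a (0, n) = -a (n, 0)) := by
  have hdiag : ∀ n : ℤ, 0 ≤ n → a (n, n) = 0 := by
    intro n hn
    have := hanti n n hn hn
    linear_combination this / 2
  have main : ∀ k : ℕ, ∀ n m : ℤ, 1 ≤ n → 1 ≤ m → (n + m).toNat = k → a (n, m) = 0 := by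
    intro k
    induction k using Nat.strong_induction_on with
    | _ k ih =>
      intro n m hn hm hk
      rcases lt_trichotomy n m with h | h | h
      · have h0 : a (n - m, m) = 0 := hzero _ _ (Or.inl (by omega))
        have hr := hrec n m (by omega) (by omega)
        have := ih (n + (m - n)).toNat (by omega) n (m - n) hn (by omega) rfl
        rw [h0, this] at hr
        simpa using hr.symm
      · subst h; exact hdiag n (by omega)
      · have h0 : a (n, m - n) = 0 := hzero _ _ (Or.inr (by omega))
        have hr := hrec n m (by omega) (by omega)
        have := ih ((n - m) + m).toNat (by omega) (n - m) m (by omega) hm rfl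
        rw [h0, this] at hr
        simpa using hr.symm
  constructor
  · intro n m hn hm; exact main (n + m).toNat n m hn hm rfl
  · intro n hn; exact hanti 0 n le_rfl (by omega)
end

section
/- Let k be a positive integer and let h be a holomorphic function on the upper half-plane H satisfying h(τ) = h(σ) − τ^{−k} h(σ/τ) for all τ, σ ∈ H with σ/τ ∈ H. Then there exists a complex constant a such that h(τ) = a·τ^{−k} − a for all τ ∈ H. -/
open Complex Filter Topology

/-
Putting σ = τz into the functional equation and comparing it with the same equation with τ and z
exchanged removes h(σ), leaving the symmetric relation h(τ)(1 - z^{-k}) = h(z)(1 - τ^{-k}).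
Any two points of H admit a common partner z = 1 + vi, v > 0 small, which is not a root of unity
since |z| > 1; so h(τ)/(1 - τ^{-k}) is independent of τ.
-/

lemma isOpen_UHP : IsOpen UHP :=
  isOpen_lt continuous_const continuous_im

lemma one_sub_zpow_ne_zero {z : ℂ} (hz : 1 < ‖z‖) {n : ℤ} (hn : n ≠ 0) : 1 - z ^ n ≠ 0 := by
  refine sub_ne_zero.mpr fun h1 => hn ?_
  have hnorm : ‖z‖ ^ n = 1 := by rw [← norm_zpow, ← h1, norm_one]
  exact (zpow_eq_one_iff_right₀ (norm_nonneg z) hz.ne').mp hnorm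

lemma one_lt_norm_one_add_mul_I {v : ℝ} (hv : v ≠ 0) : 1 < ‖1 + v * I‖ := by
  rw [← ofReal_one, norm_add_mul_I, Real.lt_sqrt zero_le_one]
  nlinarith [sq_pos_of_ne_zero hv]

lemma eventually_mul_one_add_mul_I_mem_UHP {τ : ℂ} (hτ : τ ∈ UHP) :
    ∀ᶠ v : ℝ in 𝓝 0, τ * (1 + v * I) ∈ UHP := by
  have hcont : Continuous fun v : ℝ => τ * (1 + v * I) := by fun_prop
  have hτ' : τ * (1 + ((0 : ℝ) : ℂ) * I) ∈ UHP := by simpa using hτ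
  exact hcont.continuousAt.preimage_mem_nhds (isOpen_UHP.mem_nhds hτ')

lemma exists_common_partner {τ τ₀ : ℂ} (hτ : τ ∈ UHP) (hτ₀ : τ₀ ∈ UHP) :
    ∃ w ∈ UHP, 1 < ‖w‖ ∧ τ * w ∈ UHP ∧ τ₀ * w ∈ UHP := by
  have hev : ∀ᶠ v : ℝ in 𝓝[>] 0,
      (τ * (1 + v * I) ∈ UHP ∧ τ₀ * (1 + v * I) ∈ UHP) ∧ v ∈ Set.Ioi 0 :=
    (((eventually_mul_one_add_mul_I_mem_UHP hτ).and
      (eventually_mul_one_add_mul_I_mem_UHP hτ₀)).filter_mono nhdsWithin_le_nhds).and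
      self_mem_nhdsWithin
  obtain ⟨v, ⟨hτw, hτ₀w⟩, hv⟩ := hev.exists
  refine ⟨1 + v * I, ?_, one_lt_norm_one_add_mul_I (ne_of_gt hv), hτw, hτ₀w⟩
  simpa [UHP] using hv

section FunctionalEquation

variable {n : ℤ} {h : ℂ → ℂ}

lemma mul_one_sub_zpow_symm
    (hfe : ∀ τ ∈ UHP, ∀ σ ∈ UHP, σ / τ ∈ UHP → h τ = h σ - τ ^ n * h (σ / τ))
    {τ z : ℂ} (hτ : τ ∈ UHP) (hz : z ∈ UHP) (hτz : τ * z ∈ UHP) :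
    h τ * (1 - z ^ n) = h z * (1 - τ ^ n) := by
  have hτ0 : τ ≠ 0 := fun h0 => by simp [UHP, h0] at hτ
  have hz0 : z ≠ 0 := fun h0 => by simp [UHP, h0] at hz
  have hz_quot : τ * z / τ = z := mul_div_cancel_left₀ z hτ0
  have hτ_quot : τ * z / z = τ := mul_div_cancel_right₀ τ hz0
  have eτ := hfe τ hτ (τ * z) hτz (by rwa [hz_quot])
  have ez := hfe z hz (τ * z) hτz (by rwa [hτ_quot])
  rw [hz_quot] at eτ
  rw [hτ_quot] at ez
  linear_combination eτ - ez

lemma exists_eq_mul_one_sub_zpow (hn : n ≠ 0)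
    (hsymm : ∀ τ ∈ UHP, ∀ z ∈ UHP, τ * z ∈ UHP → h τ * (1 - z ^ n) = h z * (1 - τ ^ n)) :
    ∃ a : ℂ, ∀ τ ∈ UHP, h τ = a * (1 - τ ^ n) := by
  have hτ₀ : (2 * I : ℂ) ∈ UHP := by simp [UHP]
  have hτ₀_ne : 1 - (2 * I) ^ n ≠ 0 := one_sub_zpow_ne_zero (by simp) hn
  refine ⟨h (2 * I) / (1 - (2 * I) ^ n), fun τ hτ => ?_⟩
  obtain ⟨w, hw, hw_norm, hτw, hτ₀w⟩ := exists_common_partner hτ hτ₀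
  have hτ_rel := hsymm τ hτ w hw hτw
  have hτ₀_rel := hsymm (2 * I) hτ₀ w hw hτ₀w
  have hcross : h τ * (1 - (2 * I) ^ n) = h (2 * I) * (1 - τ ^ n) := by
    refine mul_right_cancel₀ (one_sub_zpow_ne_zero hw_norm hn) ?_
    linear_combination (1 - (2 * I) ^ n) * hτ_rel - (1 - τ ^ n) * hτ₀_rel
  rw [div_mul_eq_mul_div, eq_div_iff hτ₀_ne, hcross]

end FunctionalEquation

theorem cocycle_functional_equation_solution_general
    (k : ℕ) (hk : 0 < k) (h : ℂ → ℂ)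
    (hfe : ∀ τ ∈ UHP, ∀ σ ∈ UHP, σ / τ ∈ UHP →
      h τ = h σ - τ ^ (-(k : ℤ)) * h (σ / τ)) :
    ∃ a : ℂ, ∀ τ ∈ UHP, h τ = a * τ ^ (-(k : ℤ)) - a := by
  have hk' : -(k : ℤ) ≠ 0 := by omega
  obtain ⟨a, ha⟩ := exists_eq_mul_one_sub_zpow hk' fun τ hτ z hz hτz =>
    mul_one_sub_zpow_symm hfe hτ hz hτz
  exact ⟨-a, fun τ hτ => by rw [ha τ hτ]; ring⟩

/-- a holomorphic function on `H` with `h(τ) = h(σ) - τ^{-k} h(σ/τ)`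
is of the form `h(τ) = a τ^{-k} - a`. -/
theorem cocycle_functional_equation_solution
    (k : ℕ) (hk : 0 < k) (h : ℂ → ℂ) (hol : DifferentiableOn ℂ h UHP)
    (hfe : ∀ τ ∈ UHP, ∀ σ ∈ UHP, σ / τ ∈ UHP →
      h τ = h σ - τ ^ (-(k : ℤ)) * h (σ / τ)) :
    ∃ a : ℂ, ∀ τ ∈ UHP, h τ = a * τ ^ (-(k : ℤ)) - a :=
  cocycle_functional_equation_solution_general k hk h hfe
end

section
/- Let k be an odd positive integer and τ, σ ∈ H. Then Z_k(τ,σ) = D_k(q) + D_k(r) + 2 ∑_{(a,b)} D_k(q^a r^b), where q = e^{2πiτ}, r = e^{2πiσ}, and the (absolutely convergent) sum is over all pairs (a,b) of relatively prime positive integers. -/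
open Complex Filter Topology

/-!
For odd `k`, `D_k(w) = -c_k ∑_j j^(k-1) w^j / (1 - w^j)` with `c_k = (2πi)^k / (k-1)!`.
With `a = q^j`, `b = r^j` and `k` odd, the summand of `Z_k` splits as
`(a + b) / ((1-a)(1-b)) = a/(1-a) + b/(1-b) + 2 · a/(1-a) · b/(1-b)`, and the last product is
`∑_{m,n ≥ 1} (q^m r^n)^j`. Every `(m, n)` is uniquely `d · (a, b)` with `(a, b)` coprime, so
regrouping the absolutely convergent triple sum `∑_{j,m,n} j^(k-1) (q^m r^n)^j` along this
decomposition yields `∑_{(a,b)} ∑_{d,j} j^(k-1) (q^a r^b)^(dj) = ∑_{(a,b)} D_k(q^a r^b) / (-c_k)`.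
-/

lemma norm_qexp_lt_one {τ : ℂ} (hτ : τ ∈ UHP) : ‖qexp τ‖ < 1 :=
  UpperHalfPlane.norm_exp_two_pi_I_lt_one ⟨τ, hτ⟩

lemma Dk_eq_tsum_sigma_of_odd {k : ℕ} (hk : Odd k) (w : ℂ) :
    Dk k w = -((2 * (Real.pi : ℂ) * I) ^ k / (k - 1).factorial) *
      ∑' n : ℕ+, (ArithmeticFunction.sigma (k - 1) n : ℂ) * w ^ (n : ℕ) := by
  simp only [Dk, ArithmeticFunction.sigma_apply, Nat.cast_sum, Nat.cast_pow, neg_mul, hk.neg_pow,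
    neg_div]

lemma Dk_eq_tsum_pow_div_one_sub_of_odd {k : ℕ} (hk : Odd k) {w : ℂ} (hw : ‖w‖ < 1) :
    Dk k w = -((2 * (Real.pi : ℂ) * I) ^ k / (k - 1).factorial) *
      ∑' n : ℕ+, (n : ℂ) ^ (k - 1) * w ^ (n : ℕ) / (1 - w ^ (n : ℕ)) := by
  rw [Dk_eq_tsum_sigma_of_odd hk, tsum_pow_div_one_sub_eq_tsum_sigma hw]

lemma Dk_eq_tsum_tsum_of_odd {k : ℕ} (hk : Odd k) {w : ℂ} (hw : ‖w‖ < 1) :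
    Dk k w = -((2 * (Real.pi : ℂ) * I) ^ k / (k - 1).factorial) *
      ∑' (d : ℕ+) (c : ℕ+), (c : ℂ) ^ (k - 1) * w ^ ((d : ℕ) * c) := by
  rw [Dk_eq_tsum_sigma_of_odd hk, tsum_prod_pow_eq_tsum_sigma _ hw]

lemma tsum_pnat_pow_eq_div_one_sub {𝕜 : Type*} [NormedDivisionRing 𝕜] [CompleteSpace 𝕜] {x : 𝕜}
    (hx : ‖x‖ < 1) :
    ∑' n : ℕ+, x ^ (n : ℕ) = x / (1 - x) := by
  rw [tsum_pnat_eq_tsum_succ (f := (x ^ ·))]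
  simp only [pow_succ', tsum_mul_left, tsum_geometric_of_norm_lt_one hx, div_eq_mul_inv]

lemma norm_pow_lt_one {𝕜 : Type*} [NormedDivisionRing 𝕜] {x : 𝕜} (hx : ‖x‖ < 1) {n : ℕ}
    (hn : n ≠ 0) : ‖x ^ n‖ < 1 := by
  rw [norm_pow]
  exact pow_lt_one₀ (norm_nonneg x) hx hn

lemma mul_add_div_one_sub_mul_one_sub {F : Type*} [Field F] {a b : F} (ha : a ≠ 1) (hb : b ≠ 1)
    (c : F) : c * (a + b) / ((1 - a) * (1 - b)) =
      c * a / (1 - a) + c * b / (1 - b) + 2 * (c * (a / (1 - a) * (b / (1 - b)))) := by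
  have ha' : 1 - a ≠ 0 := sub_ne_zero.2 ha.symm
  have hb' : 1 - b ≠ 0 := sub_ne_zero.2 hb.symm
  field_simp
  ring

lemma summable_norm_tsum_of_summable_norm {α β E : Type*} [NormedAddCommGroup E]
    [CompleteSpace E] {f : α × β → E} (hf : Summable fun x => ‖f x‖) :
    Summable fun a => ‖∑' b, f (a, b)‖ :=
  hf.prod.of_nonneg_of_le (fun _ => norm_nonneg _)
    fun a => norm_tsum_le_tsum_norm (hf.prod_factor a)

abbrev CoprimePairs : Type := {p : ℕ × ℕ // 0 < p.1 ∧ 0 < p.2 ∧ Nat.Coprime p.1 p.2}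

def coprimePairsProdEquiv : CoprimePairs × ℕ+ ≃ ℕ+ × ℕ+ where
  toFun x := (⟨x.2 * x.1.1.1, Nat.mul_pos x.2.pos x.1.2.1⟩,
    ⟨x.2 * x.1.1.2, Nat.mul_pos x.2.pos x.1.2.2.1⟩)
  invFun v :=
    have hg : 0 < Nat.gcd v.1 v.2 := Nat.gcd_pos_of_pos_left _ v.1.pos
    (⟨(v.1 / Nat.gcd v.1 v.2, v.2 / Nat.gcd v.1 v.2),
      Nat.div_pos (Nat.gcd_le_left _ v.1.pos) hg, Nat.div_pos (Nat.gcd_le_right _ v.2.pos) hg,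
      Nat.coprime_div_gcd_div_gcd hg⟩, ⟨Nat.gcd v.1 v.2, hg⟩)
  left_inv := by
    rintro ⟨⟨⟨a, b⟩, ha, hb, hab⟩, d⟩
    have hgcd : Nat.gcd (d * a) (d * b) = d := by rw [Nat.gcd_mul_left, hab, mul_one]
    exact Prod.ext (Subtype.ext (Prod.ext (by simp [hgcd]) (by simp [hgcd]))) (PNat.eq hgcd)
  right_inv := by
    rintro ⟨m, n⟩
    exact Prod.ext (PNat.eq (Nat.mul_div_cancel' (Nat.gcd_dvd_left _ _)))
      (PNat.eq (Nat.mul_div_cancel' (Nat.gcd_dvd_right _ _)))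

def bivariateLambertTerm (K : ℕ) (q r : ℂ) (x : (ℕ+ × ℕ+) × ℕ+) : ℂ :=
  (x.2 : ℂ) ^ K * (q ^ (x.1.1 : ℕ) * r ^ (x.1.2 : ℕ)) ^ (x.2 : ℕ)

section bivariateLambertTerm

variable (K : ℕ) {q r : ℂ}

lemma summable_norm_bivariateLambertTerm (hq : ‖q‖ < 1) (hr : ‖r‖ < 1) :
    Summable fun x => ‖bivariateLambertTerm K q r x‖ := by
  have hq' : ‖‖q‖‖ < 1 := by rwa [norm_norm]
  have hlam : Summable fun c : ℕ+ × ℕ+ => (c.2 : ℝ) ^ K * ‖q‖ ^ ((c.1 : ℕ) * c.2) :=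
    summable_prod_mul_pow K hq'
  have hgeom : Summable fun n : ℕ+ => ‖r‖ ^ (n : ℕ) :=
    (summable_geometric_of_lt_one (norm_nonneg r) hr).comp_injective PNat.coe_injective
  have hdom : Summable fun x : (ℕ+ × ℕ+) × ℕ+ =>
      (x.2 : ℝ) ^ K * ‖q‖ ^ ((x.1.1 : ℕ) * x.2) * ‖r‖ ^ (x.1.2 : ℕ) := by
    refine (summable_prod_of_nonneg fun _ => by positivity).2 ⟨fun v => ?_, ?_⟩
    · exact (hlam.prod_factor v.1).mul_right (‖r‖ ^ (v.2 : ℕ))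
    · simp only [tsum_mul_right]
      exact hlam.prod.mul_of_nonneg hgeom (fun _ => tsum_nonneg fun _ => by positivity)
        fun _ => by positivity
  refine hdom.of_nonneg_of_le (fun _ => norm_nonneg _) fun ⟨⟨m, n⟩, j⟩ => ?_
  calc ‖bivariateLambertTerm K q r ((m, n), j)‖
      = (j : ℝ) ^ K * ‖q‖ ^ ((m : ℕ) * j) * ‖r‖ ^ ((n : ℕ) * j) := by
        simp [bivariateLambertTerm, mul_pow, ← pow_mul, mul_assoc]
    _ ≤ (j : ℝ) ^ K * ‖q‖ ^ ((m : ℕ) * j) * ‖r‖ ^ (n : ℕ) := by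
        gcongr _ * ?_
        exact pow_le_pow_of_le_one (norm_nonneg r) hr.le (Nat.le_mul_of_pos_right _ j.pos)

lemma tsum_bivariateLambertTerm_fiber (hq : ‖q‖ < 1) (hr : ‖r‖ < 1) (j : ℕ+) :
    ∑' v : ℕ+ × ℕ+, bivariateLambertTerm K q r (v, j) =
      (j : ℂ) ^ K * (q ^ (j : ℕ) / (1 - q ^ (j : ℕ)) * (r ^ (j : ℕ) / (1 - r ^ (j : ℕ)))) := by
  have hpow {x : ℂ} (hx : ‖x‖ < 1) := norm_pow_lt_one hx j.ne_zero
  have hnorm {x : ℂ} (hx : ‖x‖ < 1) : Summable fun n : ℕ+ => ‖(x ^ (j : ℕ)) ^ (n : ℕ)‖ :=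
    (summable_norm_geometric_of_norm_lt_one (hpow hx)).comp_injective PNat.coe_injective
  rw [← tsum_pnat_pow_eq_div_one_sub (hpow hq), ← tsum_pnat_pow_eq_div_one_sub (hpow hr),
    tsum_mul_tsum_of_summable_norm (hnorm hq) (hnorm hr), ← tsum_mul_left]
  refine tsum_congr fun v => ?_
  simp only [bivariateLambertTerm, mul_pow, ← pow_mul, mul_comm (j : ℕ)]

lemma bivariateLambertTerm_coprimePairsProdEquiv (p : CoprimePairs) (d c : ℕ+) :
    bivariateLambertTerm K q r (coprimePairsProdEquiv (p, d), c) =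
      (c : ℂ) ^ K * (q ^ p.1.1 * r ^ p.1.2) ^ ((d : ℕ) * c) := by
  simp only [bivariateLambertTerm, coprimePairsProdEquiv, Equiv.coe_fn_mk, PNat.mk_coe]
  ring

end bivariateLambertTerm

section coprimePairs

variable (K : ℕ) {q r : ℂ} (hq : ‖q‖ < 1) (hr : ‖r‖ < 1)
include hq hr

lemma hasSum_mul_div_one_sub_mul_div_one_sub :
    HasSum (fun j : ℕ+ =>
        (j : ℂ) ^ K * (q ^ (j : ℕ) / (1 - q ^ (j : ℕ)) * (r ^ (j : ℕ) / (1 - r ^ (j : ℕ)))))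
      (∑' (p : CoprimePairs) (d : ℕ+) (c : ℕ+),
        (c : ℂ) ^ K * (q ^ p.1.1 * r ^ p.1.2) ^ ((d : ℕ) * c)) := by
  have hf := (summable_norm_bivariateLambertTerm K hq hr).of_norm
  have hsum := hf.prod_symm.prod
  suffices h : ∑' (p : CoprimePairs) (d : ℕ+) (c : ℕ+),
      (c : ℂ) ^ K * (q ^ p.1.1 * r ^ p.1.2) ^ ((d : ℕ) * c) =
      ∑' (c : ℕ+) (v : ℕ+ × ℕ+), bivariateLambertTerm K q r (v, c) by
    simp only [h, Prod.swap_prod_mk, tsum_bivariateLambertTerm_fiber K hq hr] at hsum ⊢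
    exact hsum.hasSum
  calc _ = ∑' (p : CoprimePairs) (d : ℕ+) (c : ℕ+),
        bivariateLambertTerm K q r (coprimePairsProdEquiv (p, d), c) := by
        simp only [bivariateLambertTerm_coprimePairsProdEquiv]
    _ = ∑' (x : CoprimePairs × ℕ+) (c : ℕ+),
          bivariateLambertTerm K q r (coprimePairsProdEquiv x, c) :=
        (coprimePairsProdEquiv.summable_iff.2 hf.prod).tsum_prod.symm
    _ = ∑' (v : ℕ+ × ℕ+) (c : ℕ+), bivariateLambertTerm K q r (v, c) :=
        coprimePairsProdEquiv.tsum_eq fun v => ∑' c, bivariateLambertTerm K q r (v, c)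
    _ = _ := (hf.tsum_comm (f := fun v c => bivariateLambertTerm K q r (v, c))).symm

lemma summable_norm_tsum_tsum_coprimePairs :
    Summable fun p : CoprimePairs =>
      ‖∑' (d : ℕ+) (c : ℕ+), (c : ℂ) ^ K * (q ^ p.1.1 * r ^ p.1.2) ^ ((d : ℕ) * c)‖ := by
  have hg := summable_norm_tsum_of_summable_norm (summable_norm_bivariateLambertTerm K hq hr)
  simpa only [Function.comp_def, bivariateLambertTerm_coprimePairsProdEquiv] using
    summable_norm_tsum_of_summable_norm
      (f := fun x => ∑' c, bivariateLambertTerm K q r (coprimePairsProdEquiv x, c))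
      (coprimePairsProdEquiv.summable_iff.2 hg)

end coprimePairs

/-- for odd positive `k`,
`Z_k(τ,σ) = D_k(q) + D_k(r) + 2 ∑_{(a,b)=1} D_k(q^a r^b)`,
the sum running over pairs of coprime positive integers, converging absolutely. -/
theorem ellipticZeta_eq_sum_Dk_of_odd
    (k : ℕ) (hk : Odd k) (τ σ : ℂ) (hτ : τ ∈ UHP) (hσ : σ ∈ UHP) :
    Summable (fun p : {p : ℕ × ℕ // 0 < p.1 ∧ 0 < p.2 ∧ Nat.Coprime p.1 p.2} =>
      ‖Dk k (qexp τ ^ (p : ℕ × ℕ).1 * qexp σ ^ (p : ℕ × ℕ).2)‖) ∧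
    ellipticZeta k τ σ = Dk k (qexp τ) + Dk k (qexp σ) +
      2 * ∑' p : {p : ℕ × ℕ // 0 < p.1 ∧ 0 < p.2 ∧ Nat.Coprime p.1 p.2},
        Dk k (qexp τ ^ (p : ℕ × ℕ).1 * qexp σ ^ (p : ℕ × ℕ).2) := by
  have hq := norm_qexp_lt_one hτ
  have hr := norm_qexp_lt_one hσ
  have hqr (p : CoprimePairs) : ‖qexp τ ^ p.1.1 * qexp σ ^ p.1.2‖ < 1 := by
    rw [norm_mul, norm_pow, norm_pow]
    exact mul_lt_one_of_nonneg_of_lt_one_left (by positivity)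
      (pow_lt_one₀ (norm_nonneg _) hq p.2.1.ne') (pow_le_one₀ (norm_nonneg _) hr.le)
  have hDk (p : CoprimePairs) := Dk_eq_tsum_tsum_of_odd hk (hqr p)
  refine ⟨?_, ?_⟩
  · simpa only [hDk, norm_mul, norm_neg] using
      (summable_norm_tsum_tsum_coprimePairs (k - 1) hq hr).mul_left _
  have hpow {x : ℂ} (hx : ‖x‖ < 1) (j : ℕ+) : x ^ (j : ℕ) ≠ 1 := fun h => by
    simpa [h] using norm_pow_lt_one hx j.ne_zero
  have hlambert {x : ℂ} (hx : ‖x‖ < 1) : Summable fun n : ℕ+ =>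
      (n : ℂ) ^ (k - 1) * x ^ (n : ℕ) / (1 - x ^ (n : ℕ)) :=
    (summable_norm_pow_mul_geometric_div_one_sub (k - 1) hx).comp_injective PNat.coe_injective
  have hprod := hasSum_mul_div_one_sub_mul_div_one_sub (k - 1) hq hr
  simp only [ellipticZeta, hk.neg_one_pow, neg_one_mul, sub_neg_eq_add,
    mul_add_div_one_sub_mul_one_sub (hpow hq _) (hpow hr _)]
  rw [((hlambert hq).add (hlambert hr)).tsum_add (hprod.summable.mul_left 2),
    (hlambert hq).tsum_add (hlambert hr), tsum_mul_left, hprod.tsum_eq,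
    Dk_eq_tsum_pow_div_one_sub_of_odd hk hq, Dk_eq_tsum_pow_div_one_sub_of_odd hk hr,
    tsum_congr hDk, tsum_mul_left]
  ring
end

section
/- Let k ≥ 4 be an integer. Then the elliptic zeta value obeys the additive three-term relation Z_k(τ,σ) = Z_k(τ, τ+σ) + Z_k(τ+σ, σ) for all τ, σ ∈ H. -/
open Complex Filter Topology

/-!
With `q = e^{2πiτ}` and `r = e^{2πiσ}` we have `e^{2πi(τ+σ)} = qr`, so the relation holds term by
term: for `a = q^j`, `b = r^j` and any `s`,
`(a - s b)/((1-a)(1-b)) = (a - s ab)/((1-a)(1-ab)) + (ab - s b)/((1-ab)(1-b))`.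
All three series converge absolutely because `|q|, |r| < 1`.
-/

lemma add_mem_UHP {τ σ : ℂ} (hτ : τ ∈ UHP) (hσ : σ ∈ UHP) : τ + σ ∈ UHP :=
  show 0 < (τ + σ).im by rw [add_im]; exact add_pos hτ hσ

lemma qexp_add (τ σ : ℂ) : qexp (τ + σ) = qexp τ * qexp σ := by
  rw [qexp, qexp, qexp, ← Complex.exp_add, mul_add]

section NormedField

variable {𝕜 : Type*} [NormedField 𝕜]

lemma one_sub_norm_le_norm_one_sub_pow {a : 𝕜} (ha : ‖a‖ ≤ 1) {n : ℕ} (hn : n ≠ 0) :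
    1 - ‖a‖ ≤ ‖1 - a ^ n‖ :=
  calc 1 - ‖a‖ ≤ 1 - ‖a‖ ^ n := by gcongr; exact pow_le_of_le_one (norm_nonneg a) ha hn
    _ = ‖(1 : 𝕜)‖ - ‖a ^ n‖ := by rw [norm_one, norm_pow]
    _ ≤ ‖1 - a ^ n‖ := norm_sub_norm_le _ _

lemma one_sub_pow_ne_zero {a : 𝕜} (ha : ‖a‖ < 1) {n : ℕ} (hn : n ≠ 0) : 1 - a ^ n ≠ 0 :=
  norm_pos_iff.mp ((sub_pos.mpr ha).trans_le (one_sub_norm_le_norm_one_sub_pow ha.le hn))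

lemma norm_inv_one_sub_pow_le {a : 𝕜} (ha : ‖a‖ < 1) {n : ℕ} (hn : n ≠ 0) :
    ‖(1 - a ^ n)⁻¹‖ ≤ (1 - ‖a‖)⁻¹ := by
  rw [norm_inv]
  exact inv_anti₀ (sub_pos.mpr ha) (one_sub_norm_le_norm_one_sub_pow ha.le hn)

end NormedField

lemma summable_pow_mul_sub_div_one_sub_pow_mul_one_sub_pow {𝕜 : Type*} [RCLike 𝕜] (m : ℕ) (c : 𝕜)
    {a b : 𝕜} (ha : ‖a‖ < 1) (hb : ‖b‖ < 1) :
    Summable fun j : ℕ+ => (j : 𝕜) ^ m * (a ^ (j : ℕ) - c * b ^ (j : ℕ)) /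
      ((1 - a ^ (j : ℕ)) * (1 - b ^ (j : ℕ))) := by
  set C := (1 - ‖a‖)⁻¹ * (1 - ‖b‖)⁻¹
  have hgeom {x : 𝕜} (hx : ‖x‖ < 1) : Summable fun n : ℕ => (n : ℝ) ^ m * ‖x‖ ^ n :=
    summable_pow_mul_geometric_of_norm_lt_one m (by rwa [Real.norm_of_nonneg (norm_nonneg x)])
  have hbound : Summable fun n : ℕ =>
      ((n : ℝ) ^ m * ‖a‖ ^ n + ‖c‖ * ((n : ℝ) ^ m * ‖b‖ ^ n)) * C :=
    ((hgeom ha).add ((hgeom hb).mul_left ‖c‖)).mul_right C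
  refine .of_norm_bounded (hbound.comp_injective PNat.coe_injective) fun j => ?_
  have hj : (j : ℕ) ≠ 0 := j.ne_zero
  have hnum : ‖(j : 𝕜) ^ m * (a ^ (j : ℕ) - c * b ^ (j : ℕ))‖ ≤
      ((j : ℕ) : ℝ) ^ m * ‖a‖ ^ (j : ℕ) + ‖c‖ * (((j : ℕ) : ℝ) ^ m * ‖b‖ ^ (j : ℕ)) := by
    grw [norm_mul, norm_sub_le, norm_mul, norm_pow, norm_pow, norm_pow, RCLike.norm_natCast]
    exact le_of_eq (by ring)
  have hden : ‖((1 - a ^ (j : ℕ)) * (1 - b ^ (j : ℕ)))⁻¹‖ ≤ C := by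
    rw [mul_inv, norm_mul]
    exact mul_le_mul (norm_inv_one_sub_pow_le ha hj) (norm_inv_one_sub_pow_le hb hj)
      (norm_nonneg _) (inv_nonneg.mpr (sub_pos.mpr ha).le)
  rw [div_eq_mul_inv, norm_mul]
  exact mul_le_mul hnum hden (norm_nonneg _) (by positivity)

lemma three_term_partial_fraction {K : Type*} [Field K] (x s a b : K)
    (ha : 1 - a ≠ 0) (hb : 1 - b ≠ 0) (hab : 1 - a * b ≠ 0) :
    x * (a - s * b) / ((1 - a) * (1 - b)) =
      x * (a - s * (a * b)) / ((1 - a) * (1 - a * b)) +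
        x * (a * b - s * b) / ((1 - a * b) * (1 - b)) := by
  field_simp
  ring

theorem ellipticZeta_additive_three_term_general
    (k : ℕ) (τ σ : ℂ) (hτ : τ ∈ UHP) (hσ : σ ∈ UHP) :
    ellipticZeta k τ σ = ellipticZeta k τ (τ + σ) + ellipticZeta k (τ + σ) σ := by
  have hq := norm_qexp_lt_one hτ
  have hr := norm_qexp_lt_one hσ
  have hqr := norm_qexp_lt_one (add_mem_UHP hτ hσ)
  unfold ellipticZeta
  rw [← mul_add, ← Summable.tsum_add
    (summable_pow_mul_sub_div_one_sub_pow_mul_one_sub_pow _ _ hq hqr)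
    (summable_pow_mul_sub_div_one_sub_pow_mul_one_sub_pow _ _ hqr hr)]
  congr 1
  refine tsum_congr fun j => ?_
  have hqr_ne := one_sub_pow_ne_zero hqr j.ne_zero
  rw [qexp_add, mul_pow] at hqr_ne ⊢
  exact three_term_partial_fraction _ _ _ _ (one_sub_pow_ne_zero hq j.ne_zero)
    (one_sub_pow_ne_zero hr j.ne_zero) hqr_ne

/-- additive three-term relation for `Z_k`, `k ≥ 4`. -/
theorem ellipticZeta_additive_three_term
    (k : ℕ) (hk : 4 ≤ k) (τ σ : ℂ) (hτ : τ ∈ UHP) (hσ : σ ∈ UHP) :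
    ellipticZeta k τ σ = ellipticZeta k τ (τ + σ) + ellipticZeta k (τ + σ) σ :=
  ellipticZeta_additive_three_term_general k τ σ hτ hσ
end
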